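/- For a ≥ 2 and n ≥ 1 with n odd and n > 1, the sequence (S_n(m) mod 2^a)_{m≥1} is periodic with exact period 2^a; that is, S_n(m + 2^a) ≡ S_n(m) (mod 2^a) for all m ≥ 1, and there exists m with S_n(m + 2^(a-1)) ≢ S_n(m) (mod 2^a). -/

import Mathlib

/-!
Work in `ZMod (2 ^ a)`. The increment `S_n(m + 2^a) - S_n(m)` is the sum of `x ^ n` over all
residues; pairing `x` with `-x` (`n` odd) leaves only the residues with `2x = 0`, whose
squares already vanish since `4 ∣ 2^a`. For exactness, `q = 2^(a-1)` satisfies `q ^ 2 = 0` and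
`2q = 0`, so for odd `u` the binomial expansion collapses to
`(u + q) ^ n = u ^ n + n u^(n-1) q = u ^ n + q`. Hence the increments `3 ^ n` and `(3 + q) ^ n`
of `S_n` at `2 → 3` and `2 + q → 3 + q` differ, and the shift by `q` cannot preserve both
`S_n(2)` and `S_n(3)`.
-/

def S (n m : ℕ) : ℕ := ∑ i ∈ Finset.Icc 1 m, i ^ n

open Finset

lemma ZMod.sq_eq_zero_of_add_self_eq_zero {N : ℕ} (hN : 4 ∣ N) {x : ZMod N} (hx : x + x = 0) :
    x ^ 2 = 0 := by
  obtain ⟨v, rfl⟩ := ZMod.intCast_surjective x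
  rw [← Int.cast_add, ZMod.intCast_zmod_eq_zero_iff_dvd] at hx
  rw [← Int.cast_pow, ZMod.intCast_zmod_eq_zero_iff_dvd]
  have h4 : (4 : ℤ) ∣ v + v := (Int.natCast_dvd_natCast.mpr hN).trans hx
  obtain ⟨w, rfl⟩ : 2 ∣ v := by omega
  exact hx.trans ⟨w, by ring⟩

lemma sum_pow_eq_zero_of_odd {R : Type*} [CommRing R] [Fintype R] {n : ℕ} (hn : Odd n)
    (h : ∀ x : R, x + x = 0 → x ^ n = 0) : ∑ x : R, x ^ n = 0 :=
  sum_ninvolution (fun x => -x) (fun x => by rw [hn.neg_pow, add_neg_cancel])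
    (fun x hx hneg => hx (h x (neg_eq_iff_add_eq_zero.mp hneg)))
    (fun x => mem_univ _) (fun x => neg_neg x)

lemma ZMod.sum_pow_eq_zero {N n : ℕ} [NeZero N] (hN : 4 ∣ N) (hn : 2 ≤ n) (hodd : Odd n) :
    ∑ x : ZMod N, x ^ n = 0 :=
  sum_pow_eq_zero_of_odd hodd fun _ hx =>
    pow_eq_zero_of_le hn (sq_eq_zero_of_add_self_eq_zero hN hx)

lemma ZMod.sum_range_natCast_add {N : ℕ} [NeZero N] {M : Type*} [AddCommMonoid M]
    (f : ZMod N → M) (c : ZMod N) : ∑ i ∈ range N, f (c + i) = ∑ x : ZMod N, f x := by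
  rw [← Equiv.sum_comp (Equiv.addLeft c) f]
  refine sum_nbij' (fun i => (i : ZMod N)) ZMod.val (fun _ _ => mem_univ _)
    (fun x _ => mem_range.mpr x.val_lt) (fun i hi => ZMod.val_cast_of_lt (mem_range.mp hi))
    (fun x _ => ZMod.natCast_zmod_val x) (fun _ _ => rfl)

lemma S_eq_sum_range (n m : ℕ) : S n m = ∑ i ∈ range m, (i + 1) ^ n := by
  rw [S, ← Ico_add_one_right_eq_Icc, sum_Ico_eq_sum_range, Nat.add_sub_cancel]
  simp only [add_comm 1]

lemma S_add (n m k : ℕ) : S n (m + k) = S n m + ∑ i ∈ range k, (m + 1 + i) ^ n := by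
  simp only [S_eq_sum_range, sum_range_add, add_right_comm]

lemma S_succ (n m : ℕ) : S n (m + 1) = S n m + (m + 1) ^ n := by
  simp [S_add]

lemma S_add_modEq_of_sum_pow_eq_zero {N n : ℕ} [NeZero N] (h : ∑ x : ZMod N, x ^ n = 0)
    (m : ℕ) : S n (m + N) ≡ S n m [MOD N] := by
  rw [← ZMod.natCast_eq_natCast_iff, S_add]
  push_cast
  rw [ZMod.sum_range_natCast_add (· ^ n) ((m : ZMod N) + 1), h, add_zero]

lemma add_pow_of_sq_eq_zero {R : Type*} [CommRing R] (x : R) {h : R} (hh : h ^ 2 = 0) (n : ℕ) :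
    (x + h) ^ n = x ^ n + n * x ^ (n - 1) * h := by
  simpa [Polynomial.derivative_X_pow] using
    Polynomial.aeval_add_of_sq_eq_zero (Polynomial.X ^ n : Polynomial ℤ) x h hh

lemma natCast_add_pow_of_odd {R : Type*} [CommRing R] {h : R} (hsq : h ^ 2 = 0) (hh : h + h = 0)
    {u n : ℕ} (hu : Odd u) (hn : Odd n) : ((u : R) + h) ^ n = u ^ n + h := by
  obtain ⟨k, hk⟩ := hn.mul (hu.pow (n := n - 1))
  have hcoeff : (n : R) * (u : R) ^ (n - 1) = 2 * k + 1 := by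
    exact_mod_cast congrArg (Nat.cast (R := R)) hk
  rw [add_pow_of_sq_eq_zero _ hsq, hcoeff]
  linear_combination k * hh

lemma ZMod.two_pow_pred_add_self {a : ℕ} (ha : 1 ≤ a) :
    (2 : ZMod (2 ^ a)) ^ (a - 1) + 2 ^ (a - 1) = 0 := by
  rw [← two_mul, ← pow_succ', Nat.sub_add_cancel ha]
  exact_mod_cast ZMod.natCast_self (2 ^ a)

lemma ZMod.two_pow_pred_ne_zero {a : ℕ} (ha : 1 ≤ a) : (2 : ZMod (2 ^ a)) ^ (a - 1) ≠ 0 := by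
  have : ((2 ^ (a - 1) : ℕ) : ZMod (2 ^ a)) ≠ 0 := by
    rw [ne_eq, ZMod.natCast_eq_zero_iff, Nat.pow_dvd_pow_iff_le_right one_lt_two]
    omega
  exact_mod_cast this

lemma S_add_two_pow_pred_not_modEq_succ {a n m : ℕ} (ha : 2 ≤ a) (hn : Odd n) (hm : Even m)
    (h : S n (m + 2 ^ (a - 1)) ≡ S n m [MOD 2 ^ a]) :
    ¬ S n (m + 1 + 2 ^ (a - 1)) ≡ S n (m + 1) [MOD 2 ^ a] := by
  intro h'
  rw [← ZMod.natCast_eq_natCast_iff] at h h'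
  rw [add_right_comm, S_succ, S_succ] at h'
  push_cast at h h'
  have hhalf := ZMod.two_pow_pred_add_self (a := a) (by omega)
  have hsq := ZMod.sq_eq_zero_of_add_self_eq_zero (pow_dvd_pow 2 ha) hhalf
  have hpow := natCast_add_pow_of_odd hsq hhalf hm.add_one hn
  push_cast at hpow
  apply ZMod.two_pow_pred_ne_zero (a := a) (by omega)
  linear_combination h' - h - hpow

theorem stmt11 (a n : ℕ) (ha : 2 ≤ a) (hn : 1 < n) (hodd : Odd n) :
    (∀ m, 1 ≤ m → S n (m + 2 ^ a) ≡ S n m [MOD 2 ^ a]) ∧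
    ∃ m, 1 ≤ m ∧ ¬ S n (m + 2 ^ (a - 1)) ≡ S n m [MOD 2 ^ a] := by
  have : NeZero (2 ^ a) := ⟨by positivity⟩
  have hsum : ∑ x : ZMod (2 ^ a), x ^ n = 0 := ZMod.sum_pow_eq_zero (pow_dvd_pow 2 ha) hn hodd
  refine ⟨fun m _ => S_add_modEq_of_sum_pow_eq_zero hsum m, ?_⟩
  by_contra! hcon
  exact S_add_two_pow_pred_not_modEq_succ ha hodd even_two (hcon 2 (by norm_num))
    (hcon 3 (by norm_num))
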